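/- Let M be a matroid on ground set S with injective weight function μ. Let A ⊆ OPT ⊆ B ⊆ S, where OPT is the unique maximum-weight basis. Consider M' = (M|B)/A (restrict to B then contract A), with ground set S'. Then for every element u ∈ S', the gap of u in M' is at least the gap of u in M: Δ_u^{M'} ≥ Δ_u^{M}. -/

import Mathlib

open Matroid Set

variable {α : Type*}

/-- The `ℕ∞`-valued rank of a set `X` in a matroid `M`:
the supremum of the sizes of independent subsets of `X`. -/
noncomputable def Matroid.eRank' (M : Matroid α) (X : Set α) : ℕ∞ :=
  ⨆ I ∈ {I | M.Indep I ∧ I ⊆ X}, I.encard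

/-- A set `A` *blocks* an element `e` if adding `e` to `A` does not increase the rank. -/
def Matroid.Blocks (M : Matroid α) (A : Set α) (e : α) : Prop :=
  M.eRank' (insert e A) = M.eRank' A

/-- The total weight of a set of elements. -/
noncomputable def wt (μ : α → ℝ) (I : Set α) : ℝ := ∑ᶠ e ∈ I, μ e

/-- `I` is a maximum-weight base of `M` with respect to the weight function `μ`. -/
def IsMaxWeightBase (M : Matroid α) (μ : α → ℝ) (I : Set α) : Prop :=
  M.IsBase I ∧ ∀ J, M.IsBase J → wt μ J ≤ wt μ I

/-- The modified cost function `μ_{I,ε}` adding `ε` to the weight of each element of `I`. -/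
noncomputable def modCost (μ : α → ℝ) (I : Set α) (ε : ℝ) : α → ℝ :=
  fun e => μ e + I.indicator (fun _ => ε) e

/-- `I` is an `ε`-optimal base of `M` w.r.t. `μ`:
it is a maximum-weight base for the modified cost `μ_{I,ε}`. -/
def EpsOptimal (M : Matroid α) (μ : α → ℝ) (ε : ℝ) (I : Set α) : Prop :=
  IsMaxWeightBase M (modCost μ I ε) I

/-- Contraction of a matroid, defined by duality: `M ／ C = (M✶ ↾ (M.E \ C))✶`. -/
noncomputable def Matroid.contract' (M : Matroid α) (C : Set α) : Matroid α :=
  (M✶ ↾ (M.E \ C))✶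

/-- The weight of a maximum-weight base of `M` with respect to `μ`. -/
noncomputable def OPTval (M : Matroid α) (μ : α → ℝ) : ℝ :=
  sSup ((fun B => wt μ B) '' {B | M.IsBase B})

open Classical in
/-- The gap `Δ_e` of an element `e`: `+∞` for isolated elements,
`OPT(M) − OPT(M|(S∖{e}))` for elements of the optimal base, and
`OPT(M) − OPT(M/{e}) − μ e` otherwise. -/
noncomputable def gap (M : Matroid α) (μ : α → ℝ) (e : α) : EReal :=
  if ∀ B, M.IsBase B → e ∈ B then ⊤
  else if ∃ B, IsMaxWeightBase M μ B ∧ e ∈ B then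
    ((OPTval M μ - OPTval (M ↾ (M.E \ {e})) μ : ℝ) : EReal)
  else ((OPTval M μ - OPTval (M.contract' {e}) μ - μ e : ℝ) : EReal)

/-! Since `B ⊇ OPT` is spanning, the bases of `M' = (M ↾ B) ／ A` are the sets `J` with `J ∪ A`
a base of `M` inside `B`; hence `OPT \ A` is the unique maximum-weight base of `M'` and
`OPT(M') = OPT(M) − μ(A)`. The minors `M' ＼ u` and `M' ／ u` arise from restrictions of `M ＼ u`
and `M ／ u` by contracting the independent set `A`, and such a minor loses at least `μ(A)` of
the optimum when weights are nonnegative. Subtracting gives both finite cases of the gap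
inequality; a coloop of `M` lying in `B \ A` stays a coloop of `M'`. -/

section Weight

variable {μ : α → ℝ} {S T : Set α}

lemma wt_union (hST : Disjoint S T) (hS : S.Finite) (hT : T.Finite) :
    wt μ (S ∪ T) = wt μ S + wt μ T :=
  finsum_mem_union hST hS hT

lemma wt_le_wt_of_subset (hT : T.Finite) (hST : S ⊆ T) (hμ : ∀ e ∈ T, 0 ≤ μ e) :
    wt μ S ≤ wt μ T := by
  rw [← union_sdiff_cancel hST, wt_union disjoint_sdiff_right (hT.subset hST) hT.sdiff]
  exact le_add_of_nonneg_right (finsum_nonneg fun e ↦ finsum_nonneg fun he ↦ hμ e he.1)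

end Weight

namespace Matroid

variable {M N : Matroid α} {μ : α → ℝ} {A B I J S : Set α} {e : α}

lemma contract'_eq_contract (M : Matroid α) (C : Set α) : M.contract' C = M ／ C := rfl

lemma eRank'_eq_eRk (M : Matroid α) (X : Set α) : M.eRank' X = M.eRk X := by
  obtain ⟨I, hI⟩ := M.exists_isBasis' X
  refine le_antisymm (iSup₂_le fun J hJ ↦ hJ.1.encard_le_eRk_of_subset hJ.2) ?_
  rw [← hI.encard_eq_eRk]
  exact le_iSup₂_of_le I ⟨hI.indep, hI.subset⟩ le_rfl

lemma Indep.insert_indep_of_not_blocks (hA : M.Indep A) (h : ¬ M.Blocks A e) :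
    M.Indep (insert e A) := by
  rw [hA.insert_indep_iff]
  by_contra! hdep
  refine h ?_
  rw [Blocks, eRank'_eq_eRk, eRank'_eq_eRk]
  by_cases he : e ∈ M.E
  · have hcl : e ∈ M.closure A := by_contra fun h' ↦ hdep.1 ⟨he, h'⟩
    rw [← eRk_closure_eq, closure_insert_eq_of_mem_closure hcl, eRk_closure_eq]
  · exact eRk_insert_of_notMem_ground A he

lemma IsColoop.restrict (he : M.IsColoop e) (heR : e ∈ S) (hSE : S ⊆ M.E) :
    (M ↾ S).IsColoop e :=
  (restrict_isColoop_iff hSE).2 ⟨he.notMem_closure_of_notMem (by simp), heR⟩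

lemma wt_le_OPTval [M.Finite] (hB : M.IsBase B) : wt μ B ≤ OPTval M μ :=
  le_csSup ((M.ground_finite.finite_subsets.subset fun _ hB ↦ hB.subset_ground).image _).bddAbove
    ⟨B, hB, rfl⟩

lemma OPTval_le {c : ℝ} (h : ∀ B, M.IsBase B → wt μ B ≤ c) : OPTval M μ ≤ c := by
  obtain ⟨B, hB⟩ := M.exists_isBase
  exact csSup_le ⟨_, B, hB, rfl⟩ fun _ ⟨B, hB, hBc⟩ ↦ hBc ▸ h B hB

lemma _root_.IsMaxWeightBase.OPTval_eq [M.Finite] (h : IsMaxWeightBase M μ I) :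
    OPTval M μ = wt μ I :=
  le_antisymm (OPTval_le h.2) (wt_le_OPTval h.1)

lemma OPTval_contract_add_wt_le_of_isRestriction [M.Finite] (hNM : N ≤r M)
    (hμ : ∀ e ∈ M.E, 0 ≤ μ e) (hA : N.Indep A) : OPTval (N ／ A) μ + wt μ A ≤ OPTval M μ := by
  rw [← le_sub_iff_add_le]
  refine OPTval_le fun J hJ ↦ ?_
  rw [hA.contract_isBase_iff] at hJ
  obtain ⟨D, hD, hJAD⟩ := (hJ.1.indep.of_isRestriction hNM).exists_isBase_superset
  have hDfin : D.Finite := M.ground_finite.subset hD.subset_ground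
  have hJA : wt μ (J ∪ A) = wt μ J + wt μ A :=
    wt_union hJ.2 (hDfin.subset (subset_union_left.trans hJAD))
      (hDfin.subset (subset_union_right.trans hJAD))
  linarith [wt_le_wt_of_subset hDfin hJAD (fun e he ↦ hμ e (hD.subset_ground he)),
    wt_le_OPTval (μ := μ) hD]

lemma _root_.IsMaxWeightBase.restrict_iff (hI : IsMaxWeightBase M μ I) (hIB : I ⊆ B)
    (hBE : B ⊆ M.E) : IsMaxWeightBase (M ↾ B) μ J ↔ IsMaxWeightBase M μ J ∧ J ⊆ B := by
  have hB : ∀ K, (M ↾ B).IsBase K ↔ M.IsBase K ∧ K ⊆ B :=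
    fun K ↦ (hI.1.spanning_of_superset hIB hBE).isBase_restrict_iff
  simp only [IsMaxWeightBase, hB]
  exact ⟨fun ⟨⟨hJ, hJB⟩, hmax⟩ ↦ ⟨⟨hJ, fun K hK ↦ (hI.2 K hK).trans (hmax I ⟨hI.1, hIB⟩)⟩, hJB⟩,
    fun ⟨⟨hJ, hmax⟩, hJB⟩ ↦ ⟨⟨hJ, hJB⟩, fun K hK ↦ hmax K hK.1⟩⟩

lemma _root_.IsMaxWeightBase.contract_iff [M.Finite] (hI : IsMaxWeightBase M μ I) (hAI : A ⊆ I) :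
    IsMaxWeightBase (M ／ A) μ J ↔ IsMaxWeightBase M μ (J ∪ A) ∧ Disjoint J A := by
  have hA : M.Indep A := hI.1.indep.subset hAI
  have hwt : ∀ K, M.IsBase (K ∪ A) → Disjoint K A → wt μ (K ∪ A) = wt μ K + wt μ A :=
    fun K hK hKA ↦ wt_union hKA (M.ground_finite.subset (subset_union_left.trans hK.subset_ground))
      (M.ground_finite.subset hA.subset_ground)
  have hIA : M.IsBase ((I \ A) ∪ A) ∧ Disjoint (I \ A) A :=
    ⟨by rw [sdiff_union_of_subset hAI]; exact hI.1, disjoint_sdiff_left⟩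
  simp only [IsMaxWeightBase, hA.contract_isBase_iff]
  constructor
  · rintro ⟨⟨hJ, hJA⟩, hmax⟩
    refine ⟨⟨hJ, fun K hK ↦ ?_⟩, hJA⟩
    have hwtI := hwt _ hIA.1 hIA.2
    rw [sdiff_union_of_subset hAI] at hwtI
    linarith [hmax _ hIA, hI.2 K hK, hwt J hJ hJA]
  · rintro ⟨⟨hJ, hmax⟩, hJA⟩
    refine ⟨⟨hJ, hJA⟩, fun K hK ↦ ?_⟩
    linarith [hmax _ hK.1, hwt K hK.1 hK.2, hwt J hJ hJA]

lemma _root_.IsMaxWeightBase.restrict_contract_iff [M.Finite] (hI : IsMaxWeightBase M μ I)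
    (huniq : ∀ J, IsMaxWeightBase M μ J → J = I) (hAI : A ⊆ I) (hIB : I ⊆ B) (hBE : B ⊆ M.E) :
    IsMaxWeightBase ((M ↾ B) ／ A) μ J ↔ J = I \ A := by
  have : (M ↾ B).Finite := (restrict_isRestriction M B hBE).finite
  rw [((hI.restrict_iff hIB hBE).2 ⟨hI, hIB⟩).contract_iff hAI, hI.restrict_iff hIB hBE]
  constructor
  · rintro ⟨⟨hJA, -⟩, hdisj⟩
    rw [← huniq _ hJA, union_sdiff_right, hdisj.sdiff_eq_left]
  · rintro rfl
    rw [sdiff_union_of_subset hAI]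
    exact ⟨⟨hI, hIB⟩, disjoint_sdiff_left⟩

lemma OPTval_restrict_contract_delete_add_wt_le [M.Finite] (hμ : ∀ e ∈ M.E, 0 ≤ μ e)
    (hBE : B ⊆ M.E) (hA : (M ↾ B).Indep A) (heA : e ∉ A) :
    OPTval ((M ↾ B) ／ A ＼ {e}) μ + wt μ A ≤ OPTval (M ＼ {e}) μ := by
  rw [contract_delete_comm _ (disjoint_singleton_right.2 heA)]
  have hdel : (M ↾ B) ＼ {e} ≤r M ＼ {e} :=
    ((delete_isRestriction _ _).trans (restrict_isRestriction M B hBE)).isRestriction_deleteElem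
      (by simp)
  exact OPTval_contract_add_wt_le_of_isRestriction hdel (fun f hf ↦ hμ f hf.1)
    (delete_indep_iff.2 ⟨hA, disjoint_singleton_right.2 heA⟩)

lemma OPTval_restrict_contract_contract_add_wt_le [M.Finite] (hμ : ∀ e ∈ M.E, 0 ≤ μ e)
    (hBE : B ⊆ M.E) (hA : (M ↾ B).Indep (insert e A)) (heA : e ∉ A) :
    OPTval ((M ↾ B) ／ A ／ {e}) μ + wt μ A ≤ OPTval (M ／ {e}) μ := by
  rw [contract_comm]
  have heB : e ∈ B := hA.subset_ground (mem_insert e A)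
  have hcon : (M ↾ B) ／ {e} ≤r M ／ {e} := by
    rw [restrict_contract_eq_contract_restrict _ (singleton_subset_iff.2 heB)]
    exact restrict_isRestriction _ _ (sdiff_subset_sdiff_left hBE)
  exact OPTval_contract_add_wt_le_of_isRestriction hcon (fun f hf ↦ hμ f hf.1)
    ((hA.subset (singleton_subset_iff.2 (mem_insert e A))).contract_indep_iff.2
      ⟨disjoint_singleton_right.2 heA, by rwa [union_singleton]⟩)

end Matroid

section Gap

variable {M : Matroid α} {μ : α → ℝ} {I : Set α} {e : α}

lemma gap_eq_top (h : M.IsColoop e) : gap M μ e = ⊤ := by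
  rw [gap, if_pos fun B hB ↦ h.mem_of_isBase hB]

lemma gap_eq_of_mem (h : ¬ M.IsColoop e) (hI : IsMaxWeightBase M μ I) (heI : e ∈ I) :
    gap M μ e = ((OPTval M μ - OPTval (M ＼ {e}) μ : ℝ) : EReal) := by
  rw [gap, if_neg fun h' ↦ h (isColoop_iff_forall_mem_isBase.2 h'), if_pos ⟨I, hI, heI⟩]
  rfl

lemma gap_eq_of_forall_notMem (h : ¬ M.IsColoop e) (he : ∀ I, IsMaxWeightBase M μ I → e ∉ I) :
    gap M μ e = ((OPTval M μ - OPTval (M ／ {e}) μ - μ e : ℝ) : EReal) := by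
  rw [gap, if_neg fun h' ↦ h (isColoop_iff_forall_mem_isBase.2 h'),
    if_neg fun ⟨I, hI, heI⟩ ↦ he I hI heI]
  rfl

end Gap

theorem gap_mono_of_restrict_contract_general (M : Matroid α) [M.Finite] (μ : α → ℝ)
    (hpos : ∀ e ∈ M.E, 0 < μ e)
    (OPT : Set α) (hOPT : IsMaxWeightBase M μ OPT)
    (hOPTuniq : ∀ B, IsMaxWeightBase M μ B → B = OPT)
    (A B : Set α) (hA : A ⊆ OPT) (hB : OPT ⊆ B) (hBE : B ⊆ M.E)
    (u : α) (hu : u ∈ ((M ↾ B).contract' A).E) (hu' : ¬ (M ↾ B).Blocks A u) :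
    gap M μ u ≤ gap ((M ↾ B).contract' A) μ u := by
  rw [contract'_eq_contract] at hu ⊢
  obtain ⟨huB, huA⟩ : u ∈ B ∧ u ∉ A := hu
  have hμ : ∀ e ∈ M.E, 0 ≤ μ e := fun e he ↦ (hpos e he).le
  have : (M ↾ B).Finite := (restrict_isRestriction M B hBE).finite
  have hAind : (M ↾ B).Indep A := restrict_indep_iff.2 ⟨hOPT.1.indep.subset hA, hA.trans hB⟩
  have hmax : ∀ J, IsMaxWeightBase ((M ↾ B) ／ A) μ J ↔ J = OPT \ A :=
    fun J ↦ hOPT.restrict_contract_iff hOPTuniq hA hB hBE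
  have hopt : OPTval M μ = OPTval ((M ↾ B) ／ A) μ + wt μ A := by
    have hfin : OPT.Finite := M.ground_finite.subset hOPT.1.subset_ground
    rw [hOPT.OPTval_eq, ((hmax _).2 rfl).OPTval_eq,
      ← wt_union disjoint_sdiff_left hfin.sdiff (hfin.subset hA), sdiff_union_of_subset hA]
  by_cases hcol : ((M ↾ B) ／ A).IsColoop u
  · rw [gap_eq_top hcol]
    exact le_top
  have hcolM : ¬ M.IsColoop u := fun h ↦ hcol (contract_isColoop_iff.2 ⟨h.restrict huB hBE, huA⟩)
  by_cases huOPT : u ∈ OPT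
  · rw [gap_eq_of_mem hcolM hOPT huOPT, gap_eq_of_mem hcol ((hmax _).2 rfl) ⟨huOPT, huA⟩,
      EReal.coe_le_coe_iff]
    linarith [OPTval_restrict_contract_delete_add_wt_le hμ hBE hAind huA]
  · rw [gap_eq_of_forall_notMem hcolM fun J hJ ↦ hOPTuniq J hJ ▸ huOPT,
      gap_eq_of_forall_notMem hcol fun J hJ ↦ (hmax J).1 hJ ▸ fun h ↦ huOPT h.1,
      EReal.coe_le_coe_iff]
    linarith [OPTval_restrict_contract_contract_add_wt_le hμ hBE
      (hAind.insert_indep_of_not_blocks hu') huA]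

/-- Restricting to a superset `B` of the optimal base and contracting a subset `A`
of the optimal base can only increase the gap of each remaining element. -/
theorem gap_mono_of_restrict_contract (M : Matroid α) [M.Finite] (μ : α → ℝ)
    (hinj : Set.InjOn μ M.E) (hpos : ∀ e ∈ M.E, 0 < μ e)
    (OPT : Set α) (hOPT : IsMaxWeightBase M μ OPT)
    (hOPTuniq : ∀ B, IsMaxWeightBase M μ B → B = OPT)
    (A B : Set α) (hA : A ⊆ OPT) (hB : OPT ⊆ B) (hBE : B ⊆ M.E)
    (u : α) (hu : u ∈ ((M ↾ B).contract' A).E) (hu' : ¬ (M ↾ B).Blocks A u) :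
    gap M μ u ≤ gap ((M ↾ B).contract' A) μ u :=
  gap_mono_of_restrict_contract_general M μ hpos OPT hOPT hOPTuniq A B hA hB hBE u hu hu'
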